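/- Let r ≥ 1 and k ≥ 0 be integers and let R = ℚ[ℏ,𝔟,P_1,…,P_r]. For a bridge γ ∈ Γ^{≥0}_{(0,k)→(N,0)} with heights h_0 = k, h_1, …, h_N = 0, define Ŵ_r(γ) := w_1∘⋯∘w_N, where w_u = J_{h_{u−1}−h_u} if the u-th step is not flat and w_u is scalar multiplication by −ℏ𝔟(h_u + r − u) if the u-th step is flat. Then the following identity of locally finite R-linear operators on R[p̃] holds: Σ_{γ ∈ Γ^{≥0}_{(0,k)→(r,0)}} wt̃(γ|(P_1,…,P_r)) = Σ_{j=0}^{r} ( Σ_{1 ≤ n_1 < ⋯ < n_j ≤ r} ∏_{m=1}^{j} (P_{r+1−n_m} + ℏ𝔟(r−n_m+m−1)) ) · Σ_{γ ∈ Γ^{≥0}_{(0,k)→(r−j,0)}} Ŵ_r(γ). (This is the P-part of the simplification lemma expressing the operators D_k through the weights wt̃, proved via Lemma 4.7 in the paper.) -/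

import Mathlib

/-! Cutting a nonnegative path at its last step expresses a path sum of length `n + 1` as a finite
sum of path sums of length `n` applied to the last-step operators; only finitely many last
heights contribute, which also gives local finiteness. The flat last step of `wt̃` at position
`N + 1` and that of `Ŵ_r` at position `m + 1` differ by the scalar `P_{N+1} + ℏ𝔟(r − m − 1)`,
so by induction on `N` the coefficients in front of the `Ŵ_r`-sums obey a Pascal-type
recursion. Splitting the increasing sequences `n_1 < ⋯ < n_j` according to whether `n_1` is
the least admissible value gives a second recursion for the closed form; the two agree because
shifting the parameter `τ` by one changes the coefficients by an explicit lower-order term. -/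

open MvPolynomial

noncomputable section Stmt6

/-- The coefficient ring `R = ℚ[ℏ, 𝔟, P_1, …, P_r]`. -/
abbrev RR (r : ℕ) : Type := MvPolynomial (Fin (r + 2)) ℚ

/-- The ring `R[p̃] = R[p̃_1, p̃_2, …]` (variable `k` stands for `p̃_k`; index `0` is unused). -/
abbrev PP (r : ℕ) : Type := MvPolynomial ℕ (RR r)

/-- The indeterminate `ℏ`. -/
def hb (r : ℕ) : RR r := X 0

/-- The indeterminate `𝔟`. -/
def bb (r : ℕ) : RR r := X 1

/-- The indeterminates `P_1, …, P_r` (zero-indexed). -/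
def Pv (r : ℕ) (i : Fin r) : RR r := X i.succ.succ

/-- `P_a` for a 1-based index `a ∈ [r]` (and `0` outside this range). -/
def Pn (r : ℕ) (a : ℕ) : RR r :=
  if h : 1 ≤ a ∧ a ≤ r then Pv r ⟨a - 1, by omega⟩ else 0

/-- The operators `J_k` on `R[p̃]`: `J_k = ℏ k ∂_{p̃_k}` for `k > 0`, `J_0 = 0`,
and `J_{-k} = ℏ·p̃_k` (multiplication) for `k > 0`. -/
def J (r : ℕ) (k : ℤ) : PP r → PP r :=
  if 0 < k then fun p => C (hb r) * (k.toNat : PP r) * pderiv k.toNat p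
  else if k < 0 then fun p => C (hb r) * X (-k).toNat * p
  else 0

/-- The set of paths from `(x, y)` to `(x + N, y')`, encoded as the list of the `N`
successive height increments. -/
def PathSet (y : ℤ) (N : ℕ) (y' : ℤ) : Set (List ℤ) :=
  {L | L.length = N ∧ y + L.sum = y'}

/-- The set of bridges from `(x, y)` to `(x + N, y')`: paths whose intermediate heights
`h_1, …, h_{N-1}` are all nonnegative. -/
def BridgeSet (y : ℤ) (N : ℕ) (y' : ℤ) : Set (List ℤ) :=
  {L | L ∈ PathSet y N y' ∧ ∀ j : ℕ, 0 < j → j < N → 0 ≤ y + (L.take j).sum}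

/-- A generic path weight: processed from the left, at (1-based) position `u` and current
height `y`, a non-flat step of increment `d` contributes the operator `J_{-d}`
(i.e. `J_{h_{j-1} - h_j}`), while a flat step contributes scalar multiplication by
`flat u y`. The first step's operator is applied last. -/
def wtGen (r : ℕ) (flat : ℕ → ℤ → RR r) : ℕ → ℤ → List ℤ → PP r → PP r
  | _, _, [] => id
  | u, y, d :: rest =>
      (if d = 0 then (fun p => C (flat u y) * p) else J r (-d)) ∘
        wtGen r flat (u + 1) (y + d) rest

/-- The weight `wt̃(γ|(P_1,…,P_r))`: flat step at position `u` and height `y` gives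
`P_u − ℏ𝔟 y`. -/
def wtP (r : ℕ) : ℕ → ℤ → List ℤ → PP r → PP r :=
  wtGen r fun u y => Pn r u - hb r * bb r * (y : RR r)

/-- The weight `Ŵ_r(γ)`: flat step at position `u` and height `y` gives
`−ℏ𝔟 (h_u + r − u)`. -/
def wtHat (r : ℕ) : ℕ → ℤ → List ℤ → PP r → PP r :=
  wtGen r fun u y => -(hb r * bb r * ((y + (r : ℤ) - (u : ℤ) : ℤ) : RR r))

/-- The set of strictly increasing lists of length `j` with entries in `[lo..hi]`. -/
def IncLists (j lo hi : ℕ) : Set (List ℕ) :=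
  {ns | ns.length = j ∧ ns.Chain' (· < ·) ∧ ∀ c ∈ ns, lo ≤ c ∧ c ≤ hi}

/-- The coefficient `Σ_{1 ≤ n_1 < ⋯ < n_j ≤ r} ∏_{m=1}^{j} (P_{r+1−n_m} + ℏ𝔟(r−n_m+m−1))`
(the list `ns.enum` provides the pairs `(m−1, n_m)`). -/
def OmP (r j : ℕ) : RR r :=
  ∑ᶠ ns ∈ IncLists j 1 r,
    ((ns.zipIdx.map Prod.swap).map fun md =>
      Pn r (r + 1 - md.2) +
        hb r * bb r * (((r : ℤ) - (md.2 : ℤ) + (md.1 : ℤ) : ℤ) : RR r)).prod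

namespace BridgeWeights

open Function Finset

variable {r : ℕ}

theorem isLinearMap_comp {R M₁ M₂ M₃ : Type*} [Semiring R] [AddCommMonoid M₁] [AddCommMonoid M₂]
    [AddCommMonoid M₃] [Module R M₁] [Module R M₂] [Module R M₃] {f : M₂ → M₃} {g : M₁ → M₂}
    (hf : IsLinearMap R f) (hg : IsLinearMap R g) : IsLinearMap R (f ∘ g) :=
  ((IsLinearMap.mk' f hf).comp (IsLinearMap.mk' g hg)).isLinear

theorem isLinearMap_mul_left (a : PP r) : IsLinearMap (RR r) (a * ·) :=
  (LinearMap.mulLeft (RR r) a).isLinear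

theorem _root_.IsLinearMap.map_C_mul {R σ τ : Type*} [CommSemiring R]
    {F : MvPolynomial σ R → MvPolynomial τ R} (hF : IsLinearMap R F) (a : R)
    (p : MvPolynomial σ R) : F (C a * p) = C a * F p := by
  simp only [C_mul', hF.map_smul]

theorem isLinearMap_J (k : ℤ) : IsLinearMap (RR r) (J r k) := by
  unfold J
  split_ifs
  · exact ⟨fun p q => by simp [mul_add], fun c p => by simp⟩
  · exact isLinearMap_mul_left _
  · exact (0 : PP r →ₗ[RR r] PP r).isLinear

theorem isLinearMap_wtGen (f : ℕ → ℤ → RR r) :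
    ∀ (L : List ℤ) (u : ℕ) (y : ℤ), IsLinearMap (RR r) (wtGen r f u y L)
  | [], _, _ => LinearMap.id.isLinear
  | d :: L, u, y => by
    refine isLinearMap_comp ?_ (isLinearMap_wtGen f L (u + 1) (y + d))
    split_ifs
    · exact isLinearMap_mul_left _
    · exact isLinearMap_J _

theorem wtGen_append_singleton (f : ℕ → ℤ → RR r) :
    ∀ (L : List ℤ) (u : ℕ) (y e : ℤ) (p : PP r),
      wtGen r f u y (L ++ [e]) p
        = wtGen r f u y L
            ((if e = 0 then (C (f (u + L.length) (y + L.sum)) * ·) else J r (-e)) p)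
  | [], u, y, e, p => by simp [wtGen]
  | d :: L, u, y, e, p => by
    simp only [List.cons_append, wtGen, comp_apply, wtGen_append_singleton f L,
      List.length_cons, List.sum_cons]
    rw [show u + 1 + L.length = u + (L.length + 1) by omega, add_assoc]

def NonnegPaths (g n t : ℕ) : Set (List ℤ) :=
  {L | L.length = n ∧ (g : ℤ) + L.sum = t ∧ ∀ j ≤ n, 0 ≤ (g : ℤ) + (L.take j).sum}

theorem bridgeSet_eq_nonnegPaths (g n t : ℕ) : BridgeSet g n t = NonnegPaths g n t := by
  ext L
  simp only [BridgeSet, PathSet, NonnegPaths, Set.mem_ofPred_eq]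
  constructor
  · rintro ⟨⟨hlen, hsum⟩, hmid⟩
    refine ⟨hlen, hsum, fun j hj => ?_⟩
    rcases Nat.eq_zero_or_pos j with rfl | hj0
    · simp
    rcases hj.lt_or_eq with hlt | rfl
    · exact hmid j hj0 hlt
    · rw [← hlen, List.take_length, hsum]
      exact Int.natCast_nonneg t
  · rintro ⟨hlen, hsum, hall⟩
    exact ⟨⟨hlen, hsum⟩, fun j _ hj => hall j hj.le⟩

theorem nonnegPaths_zero (g t : ℕ) : NonnegPaths g 0 t = if g = t then {[]} else ∅ := by
  ext L
  simp only [NonnegPaths, List.length_eq_zero_iff, Set.mem_ofPred_eq]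
  split_ifs with hgt
  · subst hgt
    simp only [Set.mem_singleton_iff]
    exact ⟨fun h => h.1, by rintro rfl; simp⟩
  · simp only [Set.mem_empty_iff_false, iff_false, not_and]
    rintro rfl h -
    exact hgt (by simpa using h)

theorem append_mem_nonnegPaths {g n s : ℕ} {L : List ℤ} (t : ℕ) (hL : L ∈ NonnegPaths g n s) :
    L ++ [(t : ℤ) - s] ∈ NonnegPaths g (n + 1) t := by
  obtain ⟨hlen, hsum, hall⟩ := hL
  have hsum' : (L ++ [(t : ℤ) - s]).sum = L.sum + (t - s) := by simp
  refine ⟨by simp [hlen], by omega, fun j hj => ?_⟩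
  rcases hj.lt_or_eq with hlt | rfl
  · rw [List.take_append_of_le_length (by omega)]
    exact hall j (by omega)
  · rw [List.take_of_length_le (by simp [hlen]), hsum']
    omega

theorem exists_eq_append_of_mem_nonnegPaths {g n t : ℕ} {L : List ℤ}
    (hL : L ∈ NonnegPaths g (n + 1) t) :
    ∃ s : ℕ, ∃ L' ∈ NonnegPaths g n s, L = L' ++ [(t : ℤ) - s] := by
  obtain ⟨hlen, hsum, hall⟩ := hL
  rcases L.eq_nil_or_concat with rfl | ⟨L', e, rfl⟩
  · simp at hlen
  rw [List.concat_eq_append] at hlen hsum hall ⊢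
  have hlen' : L'.length = n := by simpa using hlen
  have hprefix : ∀ j ≤ n, 0 ≤ (g : ℤ) + (L'.take j).sum := fun j hj => by
    simpa [List.take_append_of_le_length (hlen' ▸ hj)] using hall j (by omega)
  have hs : 0 ≤ (g : ℤ) + L'.sum := by simpa [← hlen'] using hprefix n le_rfl
  refine ⟨((g : ℤ) + L'.sum).toNat, L', ⟨hlen', by omega, hprefix⟩, ?_⟩
  simp only [List.sum_append, List.sum_singleton] at hsum
  congr
  omega

def stepOp (f : ℕ → ℤ → RR r) (u s t : ℕ) (p : PP r) : PP r :=
  if s = t then C (f u t) * p else J r ((s : ℤ) - t) p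

theorem wtGen_append_of_mem_nonnegPaths (f : ℕ → ℤ → RR r) {g n s : ℕ} {L : List ℤ}
    (hL : L ∈ NonnegPaths g n s) (t : ℕ) (p : PP r) :
    wtGen r f 1 g (L ++ [(t : ℤ) - s]) p = wtGen r f 1 g L (stepOp f (n + 1) s t p) := by
  obtain ⟨hlen, hsum, -⟩ := hL
  rw [wtGen_append_singleton, hlen, hsum, add_comm 1 n]
  unfold stepOp
  by_cases hst : s = t
  · simp [hst]
  · rw [if_neg (by omega), if_neg hst, neg_sub]

/-- A last step from height `s > t` acts by `J_{s-t} = ℏ (s-t) ∂_{p̃_{s-t}}`, which kills `p`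
unless `p̃_{s-t}` occurs in `p`; so only the last heights in this finset contribute. -/
def lastHeights (p : PP r) (t : ℕ) : Finset ℕ :=
  range (t + 1) ∪ p.vars.image (· + t)

theorem stepOp_eq_zero_of_notMem_lastHeights (f : ℕ → ℤ → RR r) (u : ℕ) {p : PP r} {s t : ℕ}
    (hs : s ∉ lastHeights p t) : stepOp f u s t p = 0 := by
  simp only [lastHeights, mem_union, mem_range, mem_image, not_or, not_exists, not_and] at hs
  obtain ⟨hts, hvars⟩ := hs
  have hv : s - t ∉ p.vars := fun h => hvars _ h (by omega)
  rw [stepOp, if_neg (by omega), J, if_pos (by omega),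
    show ((s : ℤ) - t).toNat = s - t by omega, pderiv_eq_zero_of_notMem_vars hv, mul_zero]

def pathSum (f : ℕ → ℤ → RR r) (n g t : ℕ) (p : PP r) : PP r :=
  ∑ᶠ L ∈ NonnegPaths g n t, wtGen r f 1 g L p

abbrev contributing (f : ℕ → ℤ → RR r) (n g t : ℕ) (p : PP r) : Set (List ℤ) :=
  NonnegPaths g n t ∩ support fun L => wtGen r f 1 g L p

theorem contributing_succ (f : ℕ → ℤ → RR r) (n g t : ℕ) (p : PP r) :
    contributing f (n + 1) g t p
      = ⋃ s ∈ (lastHeights p t : Set ℕ),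
          (· ++ [(t : ℤ) - s]) '' contributing f n g s (stepOp f (n + 1) s t p) := by
  ext L
  simp only [Set.mem_inter_iff, mem_support, Set.mem_iUnion, Set.mem_image, exists_prop, mem_coe]
  constructor
  · rintro ⟨hL, hne⟩
    obtain ⟨s, L', hL', rfl⟩ := exists_eq_append_of_mem_nonnegPaths hL
    rw [wtGen_append_of_mem_nonnegPaths f hL'] at hne
    refine ⟨s, ?_, L', ⟨hL', hne⟩, rfl⟩
    by_contra hs
    rw [stepOp_eq_zero_of_notMem_lastHeights f _ hs, (isLinearMap_wtGen f _ _ _).map_zero] at hne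
    exact hne rfl
  · rintro ⟨s, -, L', ⟨hL', hne⟩, rfl⟩
    exact ⟨append_mem_nonnegPaths t hL', by rwa [wtGen_append_of_mem_nonnegPaths f hL']⟩

theorem finite_contributing (f : ℕ → ℤ → RR r) (g : ℕ) :
    ∀ (n t : ℕ) (p : PP r), (contributing f n g t p).Finite
  | 0, t, p => by
    refine (Set.finite_singleton []).subset fun L hL => ?_
    have := hL.1
    rw [nonnegPaths_zero] at this
    split_ifs at this
    exacts [this, this.elim]
  | n + 1, t, p => by
    rw [contributing_succ]
    exact (lastHeights p t).finite_toSet.biUnion fun s _ =>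
      (finite_contributing f g n s _).image _

theorem pathSum_eq_finsum_contributing (f : ℕ → ℤ → RR r) (n g t : ℕ) (p : PP r) :
    pathSum f n g t p = ∑ᶠ L ∈ contributing f n g t p, wtGen r f 1 g L p :=
  (finsum_mem_inter_support _ _).symm

theorem pathSum_zero (f : ℕ → ℤ → RR r) (g t : ℕ) (p : PP r) :
    pathSum f 0 g t p = if g = t then p else 0 := by
  rw [pathSum, nonnegPaths_zero]
  split_ifs
  · rw [finsum_mem_singleton]
    rfl
  · exact finsum_mem_empty

theorem pathSum_succ (f : ℕ → ℤ → RR r) (n g t : ℕ) (p : PP r) :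
    pathSum f (n + 1) g t p
      = ∑ s ∈ lastHeights p t, pathSum f n g s (stepOp f (n + 1) s t p) := by
  have hdisj : (lastHeights p t : Set ℕ).PairwiseDisjoint fun s =>
      (· ++ [(t : ℤ) - s]) '' contributing f n g s (stepOp f (n + 1) s t p) := by
    intro s _ s' _ hss'
    refine Set.disjoint_left.mpr ?_
    rintro _ ⟨L, -, rfl⟩ ⟨L', -, h⟩
    have := (List.append_inj' h rfl).2
    simp only [List.cons.injEq, and_true] at this
    omega
  rw [pathSum_eq_finsum_contributing, contributing_succ, finsum_mem_biUnion hdisj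
    (lastHeights p t).finite_toSet fun s _ => (finite_contributing f g n s _).image _,
    finsum_mem_coe_finset]
  refine sum_congr rfl fun s _ => ?_
  rw [finsum_mem_image (List.append_left_injective _).injOn, pathSum_eq_finsum_contributing]
  exact finsum_mem_congr rfl fun L hL => wtGen_append_of_mem_nonnegPaths f hL.1 t p

theorem isLinearMap_pathSum (f : ℕ → ℤ → RR r) (n g t : ℕ) :
    IsLinearMap (RR r) (pathSum f n g t) where
  map_add p q := by
    simp only [pathSum, (isLinearMap_wtGen f _ _ _).map_add]
    exact finsum_mem_add_distrib' (finite_contributing f g n t p) (finite_contributing f g n t q)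
  map_smul c p := by
    simp only [pathSum, (isLinearMap_wtGen f _ _ _).map_smul]
    exact ((DistribSMul.toAddMonoidHom (PP r) c).map_finsum_mem' (finite_contributing f g n t p)).symm

def flatWeight (q : ℕ → RR r) : ℕ → ℤ → RR r := fun u y => q u - hb r * bb r * (y : RR r)

def hatScalar (b : ℤ) : ℕ → RR r := fun u => hb r * bb r * (((u : ℤ) - b : ℤ) : RR r)

theorem stepOp_flatWeight (q q' : ℕ → RR r) (u u' s t : ℕ) (p : PP r) :
    stepOp (flatWeight q) u s t p
      = stepOp (flatWeight q') u' s t p + if s = t then C (q u - q' u') * p else 0 := by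
  unfold stepOp flatWeight
  split_ifs
  · rw [← add_mul, ← map_add]
    congr 2
    ring
  · rw [add_zero]

theorem sum_pathSum_stepOp_flatWeight (q q' : ℕ → RR r) (u m g t : ℕ) (p : PP r) :
    ∑ s ∈ lastHeights p t, pathSum (flatWeight q') m g s (stepOp (flatWeight q) u s t p)
      = pathSum (flatWeight q') (m + 1) g t p
        + C (q u - q' (m + 1)) * pathSum (flatWeight q') m g t p := by
  have hlin := isLinearMap_pathSum (flatWeight q') m g
  simp only [stepOp_flatWeight q q' u (m + 1), (hlin _).map_add]
  rw [sum_add_distrib, ← pathSum_succ, sum_eq_single_of_mem t (by simp [lastHeights])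
    fun s _ hst => by rw [if_neg hst, (hlin s).map_zero], if_pos rfl, (hlin t).map_C_mul]

def omCoeff (q : ℕ → RR r) : ℕ → ℕ → ℤ → RR r
  | _, 0, _ => 1
  | 0, _ + 1, _ => 0
  | N + 1, j + 1, τ =>
      omCoeff q N (j + 1) τ + (q (N + 1) + hb r * bb r * (((N : ℤ) + τ : ℤ) : RR r))
        * omCoeff q N j (τ + 1)

theorem omCoeff_of_lt (q : ℕ → RR r) : ∀ {N j : ℕ} (τ : ℤ), N < j → omCoeff q N j τ = 0
  | 0, j + 1, _, _ => rfl
  | N + 1, j + 1, τ, h => by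
    rw [omCoeff, omCoeff_of_lt q τ (by omega), omCoeff_of_lt q (τ + 1) (by omega), mul_zero,
      add_zero]

theorem omCoeff_succ_shift (q : ℕ → RR r) : ∀ (N j : ℕ) (τ : ℤ),
    omCoeff q N (j + 1) (τ + 1)
      = omCoeff q N (j + 1) τ
        + hb r * bb r * (((N : ℤ) - j : ℤ) : RR r) * omCoeff q N j (τ + 1)
  | 0, 0, τ => by simp [omCoeff]
  | 0, j + 1, τ => by simp [omCoeff]
  | N + 1, 0, τ => by
    simp only [omCoeff, omCoeff_succ_shift q N 0 τ]
    push_cast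
    ring
  | N + 1, j + 1, τ => by
    rw [omCoeff, omCoeff, omCoeff, omCoeff_succ_shift q N (j + 1) τ,
      omCoeff_succ_shift q N j (τ + 1)]
    push_cast
    ring

theorem omCoeff_succ_succ' (q : ℕ → RR r) (N j : ℕ) (τ : ℤ) :
    omCoeff q (N + 1) (j + 1) τ
      = omCoeff q N (j + 1) (τ + 1)
        + (q (N + 1) + hb r * bb r * ((τ + j : ℤ) : RR r)) * omCoeff q N j (τ + 1) := by
  rw [omCoeff, omCoeff_succ_shift]
  push_cast
  ring

theorem sum_range_mul_of_recurrence {M : Type*} [CommSemiring M] {A B D V : ℕ → M} {N : ℕ}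
    (hA : A (N + 1) = 0) (hB₀ : B 0 = A 0) (hB : ∀ j ≤ N, B (j + 1) = A (j + 1) + D j * A j) :
    ∑ j ∈ range (N + 1 + 1), B j * V (N + 1 - j)
      = ∑ j ∈ range (N + 1), A j * (V (N - j + 1) + D j * V (N - j)) := by
  have hshift : ∑ j ∈ range (N + 1), A j * V (N - j + 1)
      = ∑ j ∈ range (N + 1), A (j + 1) * V (N - j) + A 0 * V (N + 1) := by
    rw [sum_range_succ', sum_range_succ, hA, zero_mul, add_zero]
    congr 1
    exact sum_congr rfl fun j hj => by rw [show N - (j + 1) + 1 = N - j by simp at hj; omega]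
  rw [sum_range_succ', hB₀, Nat.sub_zero,
    sum_congr rfl fun j hj => by rw [hB j (by simp at hj; omega), Nat.add_sub_add_right],
    sum_congr rfl fun j _ => mul_add (A j) _ _, sum_add_distrib, hshift]
  simp only [add_mul, sum_add_distrib, mul_assoc, mul_left_comm (D _)]
  ring

theorem pathSum_flatWeight_eq_sum (q : ℕ → RR r) (b : ℤ) (g : ℕ) :
    ∀ (N t : ℕ) (p : PP r),
      pathSum (flatWeight q) N g t p
        = ∑ j ∈ range (N + 1),
            C (omCoeff q N j (b - N)) * pathSum (flatWeight (hatScalar b)) (N - j) g t p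
  | 0, t, p => by simp [omCoeff, pathSum_zero]
  | N + 1, t, p => by
    simp only [pathSum_succ, pathSum_flatWeight_eq_sum q b g N]
    rw [sum_comm]
    simp only [← mul_sum, sum_pathSum_stepOp_flatWeight]
    refine (sum_range_mul_of_recurrence (V := fun m => pathSum (flatWeight (hatScalar b)) m g t p)
      (A := fun j => C (omCoeff q N j (b - N)))
      (D := fun j => C (q (N + 1) - hatScalar b (N - j + 1)))
      (by simp only [omCoeff_of_lt q _ (Nat.lt_succ_self N), map_zero]) (by simp only [omCoeff])
      fun j hj => ?_).symm
    rw [omCoeff_succ_succ', show b - ((N + 1 : ℕ) : ℤ) + 1 = b - N by push_cast; ring, hatScalar,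
      ← map_mul, ← map_add]
    push_cast [Nat.cast_sub hj]
    congr 1
    ring

theorem mem_incLists_iff {ns : List ℕ} {j lo hi : ℕ} :
    ns ∈ IncLists j lo hi ↔ ns.length = j ∧ ns.Pairwise (· < ·) ∧ ∀ c ∈ ns, lo ≤ c ∧ c ≤ hi := by
  rw [IncLists, Set.mem_ofPred_eq, List.Chain', List.isChain_iff_pairwise]

theorem incLists_zero (lo hi : ℕ) : IncLists 0 lo hi = {[]} := by
  ext ns
  simp only [mem_incLists_iff, List.length_eq_zero_iff, Set.mem_singleton_iff]
  exact ⟨fun h => h.1, by rintro rfl; simp⟩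

theorem cons_mem_incLists_iff {a : ℕ} {ns : List ℕ} {j lo hi : ℕ} :
    a :: ns ∈ IncLists (j + 1) lo hi ↔ lo ≤ a ∧ a ≤ hi ∧ ns ∈ IncLists j (a + 1) hi := by
  simp only [mem_incLists_iff, List.length_cons, List.pairwise_cons, List.mem_cons,
    forall_eq_or_imp]
  constructor
  · rintro ⟨hlen, ⟨hlt, hpw⟩, ⟨hlo, hhi⟩, hall⟩
    exact ⟨hlo, hhi, by omega, hpw, fun c hc => ⟨hlt c hc, (hall c hc).2⟩⟩
  · rintro ⟨hlo, hhi, hlen, hpw, hall⟩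
    exact ⟨by omega, ⟨fun c hc => (hall c hc).1, hpw⟩, ⟨hlo, hhi⟩,
      fun c hc => ⟨by linarith [(hall c hc).1], (hall c hc).2⟩⟩

theorem incLists_succ_of_lt {j lo hi : ℕ} (h : hi < lo) : IncLists (j + 1) lo hi = ∅ := by
  refine Set.eq_empty_of_forall_notMem fun ns hns => ?_
  rcases ns with _ | ⟨a, ns⟩
  · simp [mem_incLists_iff] at hns
  · have := cons_mem_incLists_iff.mp hns
    omega

theorem incLists_succ_of_le {j lo hi : ℕ} (h : lo ≤ hi) :
    IncLists (j + 1) lo hi = IncLists (j + 1) (lo + 1) hi ∪ (lo :: ·) '' IncLists j (lo + 1) hi := by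
  ext ns
  rcases ns with _ | ⟨a, ns⟩
  · simp [mem_incLists_iff]
  simp only [Set.mem_union, Set.mem_image, List.cons.injEq, cons_mem_incLists_iff]
  constructor
  · rintro ⟨hlo, hhi, hns⟩
    rcases hlo.lt_or_eq with hlt | rfl
    · exact Or.inl ⟨hlt, hhi, hns⟩
    · exact Or.inr ⟨ns, hns, rfl, rfl⟩
  · rintro (⟨hlo, hhi, hns⟩ | ⟨ns', hns', rfl, rfl⟩)
    · exact ⟨by omega, hhi, hns⟩
    · exact ⟨le_rfl, h, hns'⟩

theorem finite_incLists : ∀ (j lo hi : ℕ), (IncLists j lo hi).Finite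
  | 0, lo, hi => by simp [incLists_zero]
  | j + 1, lo, hi => by
    refine ((Set.finite_Icc lo hi).biUnion fun a _ => (finite_incLists j (a + 1) hi).image
      (a :: ·)).subset fun ns hns => ?_
    rcases ns with _ | ⟨a, ns⟩
    · simp [mem_incLists_iff] at hns
    obtain ⟨hlo, hhi, hns⟩ := cons_mem_incLists_iff.mp hns
    exact Set.mem_biUnion ⟨hlo, hhi⟩ ⟨ns, hns, rfl⟩

/-- The factor of `OmP` at the pair `(m - 1, n_m)`, with `(Pn r, r, 0)` generalized to
`(q, N, τ)`. -/
def omFactor (q : ℕ → RR r) (N : ℕ) (τ : ℤ) (md : ℕ × ℕ) : RR r :=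
  q (N + 1 - md.2) + hb r * bb r * (((N : ℤ) - md.2 + md.1 + τ : ℤ) : RR r)

def incListSum (q : ℕ → RR r) (N lo j : ℕ) (τ : ℤ) : RR r :=
  ∑ᶠ ns ∈ IncLists j lo N, ((ns.zipIdx.map Prod.swap).map (omFactor q N τ)).prod

theorem prod_omFactor_cons (q : ℕ → RR r) (N : ℕ) (τ : ℤ) (a : ℕ) (ns : List ℕ) :
    (((a :: ns).zipIdx.map Prod.swap).map (omFactor q N τ)).prod
      = omFactor q N τ (0, a) * ((ns.zipIdx.map Prod.swap).map (omFactor q N (τ + 1))).prod := by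
  simp only [List.zipIdx_cons, List.zipIdx_succ, List.map_cons, List.map_map, List.prod_cons]
  congr 2
  refine List.map_congr_left fun ⟨n, m⟩ _ => ?_
  simp only [comp_apply, Prod.swap_prod_mk, omFactor]
  push_cast
  ring

theorem incListSum_eq_omCoeff (q : ℕ → RR r) (N : ℕ) :
    ∀ (M lo j : ℕ) (τ : ℤ), lo + M = N + 1 → incListSum q N lo j τ = omCoeff q M j τ
  | _, lo, 0, τ, _ => by simp [incListSum, incLists_zero, omCoeff]
  | 0, lo, j + 1, τ, h => by
    rw [incListSum, incLists_succ_of_lt (by omega), finsum_mem_empty, omCoeff]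
  | M + 1, lo, j + 1, τ, h => by
    rw [incListSum, incLists_succ_of_le (by omega), finsum_mem_union ?disj
      (finite_incLists _ _ _) ((finite_incLists _ _ _).image _),
      finsum_mem_image (List.cons_injective).injOn]
    case disj =>
      refine Set.disjoint_left.mpr fun ns hns ⟨ns', _, h'⟩ => ?_
      subst h'
      have := cons_mem_incLists_iff.mp hns
      omega
    simp only [prod_omFactor_cons]
    rw [← mul_finsum_mem, ← incListSum, ← incListSum,
      incListSum_eq_omCoeff q N M (lo + 1) _ _ (by omega),
      incListSum_eq_omCoeff q N M (lo + 1) _ _ (by omega), omCoeff, omFactor]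
    congr 4
    · simp only
      omega
    · congr 1
      push_cast
      omega

theorem omP_eq_omCoeff (r j : ℕ) : OmP r j = omCoeff (Pn r) r j 0 := by
  rw [← incListSum_eq_omCoeff (Pn r) r r 1 j 0 (by omega), incListSum, OmP]
  unfold omFactor
  simp only [add_zero]

theorem wtHat_eq_wtGen (r : ℕ) : wtHat r = wtGen r (flatWeight (hatScalar r)) := by
  unfold wtHat
  congr
  funext u y
  simp only [flatWeight, hatScalar]
  push_cast
  ring

end BridgeWeights

open BridgeWeights

theorem stmt6_general (r : ℕ) (k : ℕ) :
    (∀ p : PP r,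
        {L ∈ BridgeSet (k : ℤ) r 0 | wtP r 1 (k : ℤ) L p ≠ 0}.Finite) ∧
    (∀ p : PP r, ∀ j : ℕ, j ≤ r →
        {L ∈ BridgeSet (k : ℤ) (r - j) 0 | wtHat r 1 (k : ℤ) L p ≠ 0}.Finite) ∧
    (∀ p : PP r,
        ∑ᶠ L ∈ BridgeSet (k : ℤ) r 0, wtP r 1 (k : ℤ) L p
          = ∑ j ∈ Finset.range (r + 1),
              C (OmP r j) * ∑ᶠ L ∈ BridgeSet (k : ℤ) (r - j) 0, wtHat r 1 (k : ℤ) L p) := by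
  have hbridge (n : ℕ) : BridgeSet (k : ℤ) n 0 = NonnegPaths k n 0 := by
    exact_mod_cast bridgeSet_eq_nonnegPaths k n 0
  simp only [hbridge, wtHat_eq_wtGen]
  refine ⟨fun p => finite_contributing _ k r 0 p,
    fun p j _ => finite_contributing _ k (r - j) 0 p, fun p => ?_⟩
  simp only [omP_eq_omCoeff]
  exact sub_self (r : ℤ) ▸ pathSum_flatWeight_eq_sum (Pn r) r k r 0 p

/-- **Theorem (the `P`-part of the simplification of the operators `D_k`, via Lemma 4.7
of the paper).** For `r ≥ 1`, `k ≥ 0` and `R = ℚ[ℏ,𝔟,P_1,…,P_r]`, one has the identity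
of locally finite `R`-linear operators on `R[p̃]`:
`Σ_{γ ∈ Γ^{≥0}_{(0,k)→(r,0)}} wt̃(γ|(P_1,…,P_r))
  = Σ_{j=0}^{r} (Σ_{1≤n_1<⋯<n_j≤r} ∏_{m=1}^{j} (P_{r+1−n_m} + ℏ𝔟(r−n_m+m−1)))
      · Σ_{γ ∈ Γ^{≥0}_{(0,k)→(r−j,0)}} Ŵ_r(γ)`. -/
theorem stmt6 (r : ℕ) (hr : 1 ≤ r) (k : ℕ) :
    (∀ p : PP r,
        {L ∈ BridgeSet (k : ℤ) r 0 | wtP r 1 (k : ℤ) L p ≠ 0}.Finite) ∧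
    (∀ p : PP r, ∀ j : ℕ, j ≤ r →
        {L ∈ BridgeSet (k : ℤ) (r - j) 0 | wtHat r 1 (k : ℤ) L p ≠ 0}.Finite) ∧
    (∀ p : PP r,
        ∑ᶠ L ∈ BridgeSet (k : ℤ) r 0, wtP r 1 (k : ℤ) L p
          = ∑ j ∈ Finset.range (r + 1),
              C (OmP r j) * ∑ᶠ L ∈ BridgeSet (k : ℤ) (r - j) 0, wtHat r 1 (k : ℤ) L p) :=
  stmt6_general r k

end Stmt6
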